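/- Let f be continuously differentiable and nowhere zero on Ω and let P := 1 − (1/(f†f)) f f†. Then for D ∈ {L, R}, the matrix M_D := [∂_D P, P] equals (1/(f†f))·(P (∂_D f) f† − f (∂_D f)† P); moreover M_D is skew-Hermitian ((M_D)† = −M_D) and traceless (tr M_D = 0), i.e. M_D takes values in the Lie algebra su(N). -/

import Mathlib

/-!
With `s = f†f`, `u = ∂f` and `A = P u f†`, differentiating `P = 1 - f f† / s` gives
`∂P = -(A + A†) / s`. Since `P` is Hermitian, `P f = 0` and `P A = A`, the commutator collapses to
`[∂P, P] = (A - A†) / s`. Skew-Hermiticity and tracelessness hold for the commutator of any two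
Hermitian matrices, and `∂P` is Hermitian because `s` is real.
-/

open Matrix

noncomputable section

attribute [local instance] Matrix.normedAddCommGroup Matrix.normedSpace

/-- Vectors in ℂ^N. -/
abbrev Vec (N : ℕ) := Fin N → ℂ

/-- Hermitian inner product v† w. -/
def hermIP {N : ℕ} (v w : Vec N) : ℂ := dotProduct (star v) w

/-- The matrix v w†. -/
def outerM {N : ℕ} (v w : Vec N) : Matrix (Fin N) (Fin N) ℂ := vecMulVec v (star w)

/-- The projector P = 1 − (1/(f†f)) f f†. -/
def projM {N : ℕ} (f : Vec N) : Matrix (Fin N) (Fin N) ℂ :=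
  1 - (1 / hermIP f f) • outerM f f

/-- Matrix commutator [A,B] = AB − BA. -/
def mcomm {N : ℕ} (A B : Matrix (Fin N) (Fin N) ℂ) : Matrix (Fin N) (Fin N) ℂ :=
  A * B - B * A

/-- Light-cone direction ξ_L. -/
def dL : ℝ × ℝ := (1, 0)

/-- Light-cone direction ξ_R. -/
def dR : ℝ × ℝ := (0, 1)

/-- Directional (partial) derivative in direction `v`. -/
def pdv {E : Type*} [NormedAddCommGroup E] [NormedSpace ℝ E]
    (v : ℝ × ℝ) (g : ℝ × ℝ → E) (p : ℝ × ℝ) : E := fderiv ℝ g p v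

/-- The CP^{N−1} Euler–Lagrange equation
P·(∂_L∂_R f − (1/(f†f))((f†∂_Rf)∂_Lf + (f†∂_Lf)∂_Rf)) = 0 at a point. -/
def EL {N : ℕ} (f : ℝ × ℝ → Vec N) (p : ℝ × ℝ) : Prop :=
  projM (f p) *ᵥ (pdv dL (fun q => pdv dR f q) p
    - (1 / hermIP (f p) (f p)) • (hermIP (f p) (pdv dR f p) • pdv dL f p
      + hermIP (f p) (pdv dL f p) • pdv dR f p)) = 0

section Algebra

variable {N : ℕ}

open scoped ComplexOrder in
lemma hermIP_self_ne_zero {x : Vec N} (hx : x ≠ 0) : hermIP x x ≠ 0 :=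
  dotProduct_star_self_eq_zero.not.2 hx

lemma star_hermIP (x y : Vec N) : star (hermIP x y) = hermIP y x := by
  rw [hermIP, hermIP, star_dotProduct, star_star]

lemma isSelfAdjoint_hermIP_self (x : Vec N) : IsSelfAdjoint (hermIP x x) :=
  star_hermIP x x

lemma conjTranspose_outerM (x y : Vec N) : (outerM x y)ᴴ = outerM y x := by
  rw [outerM, outerM, conjTranspose_vecMulVec, star_star]

lemma isHermitian_outerM_add_outerM (x y : Vec N) : (outerM x y + outerM y x).IsHermitian := by
  simpa only [conjTranspose_outerM] using isHermitian_add_transpose_self (outerM x y)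

lemma mul_outerM (M : Matrix (Fin N) (Fin N) ℂ) (x y : Vec N) :
    M * outerM x y = outerM (M *ᵥ x) y :=
  mul_vecMulVec M x _

lemma outerM_mul (x y : Vec N) (M : Matrix (Fin N) (Fin N) ℂ) :
    outerM x y * M = outerM x (Mᴴ *ᵥ y) := by
  rw [outerM, outerM, vecMulVec_mul, star_mulVec, conjTranspose_conjTranspose]

lemma outerM_mulVec (x y z : Vec N) : outerM x y *ᵥ z = hermIP y z • x := by
  rw [outerM, vecMulVec_mulVec, op_smul_eq_smul, hermIP]

lemma projM_mulVec (x u : Vec N) : projM x *ᵥ u = u - (hermIP x u / hermIP x x) • x := by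
  rw [projM, sub_mulVec, one_mulVec, smul_mulVec, outerM_mulVec, smul_smul, one_div_mul_eq_div]

lemma projM_mulVec_self {x : Vec N} (hx : hermIP x x ≠ 0) : projM x *ᵥ x = 0 := by
  rw [projM_mulVec, div_self hx, one_smul, sub_self]

lemma projM_mulVec_projM_mulVec {x : Vec N} (hx : hermIP x x ≠ 0) (u : Vec N) :
    projM x *ᵥ (projM x *ᵥ u) = projM x *ᵥ u := by
  conv_lhs => rw [projM_mulVec x u]
  rw [mulVec_sub, mulVec_smul, projM_mulVec_self hx, smul_zero, sub_zero]

lemma isHermitian_projM (x : Vec N) : (projM x).IsHermitian := by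
  simp only [IsHermitian, projM, conjTranspose_sub, conjTranspose_one, conjTranspose_smul,
    conjTranspose_outerM, star_div₀, star_one, star_hermIP]

lemma conjTranspose_mcomm_of_isHermitian {A B : Matrix (Fin N) (Fin N) ℂ}
    (hA : A.IsHermitian) (hB : B.IsHermitian) : (mcomm A B)ᴴ = -mcomm A B := by
  rw [mcomm, conjTranspose_sub, conjTranspose_mul, conjTranspose_mul, hA.eq, hB.eq, neg_sub]

lemma trace_mcomm (A B : Matrix (Fin N) (Fin N) ℂ) : (mcomm A B).trace = 0 := by
  rw [mcomm, trace_sub, trace_mul_comm, sub_self]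

lemma mcomm_smul_left (c : ℂ) (A B : Matrix (Fin N) (Fin N) ℂ) :
    mcomm (c • A) B = c • mcomm A B := by
  rw [mcomm, mcomm, Matrix.smul_mul, Matrix.mul_smul, smul_sub]

lemma mcomm_outerM_add_outerM {P : Matrix (Fin N) (Fin N) ℂ} {a w : Vec N}
    (hP : P.IsHermitian) (ha : P *ᵥ a = 0) (hw : P *ᵥ w = w) :
    mcomm (outerM w a + outerM a w) P = outerM a w - outerM w a := by
  rw [mcomm, add_mul, mul_add, outerM_mul, outerM_mul, mul_outerM, mul_outerM, hP.eq, ha, hw]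
  simp [outerM]

end Algebra

section Calculus

variable {N : ℕ}

lemma HasDerivAt.hermIP {x y : ℝ → Vec N} {x' y' : Vec N} {t : ℝ}
    (hx : HasDerivAt x x' t) (hy : HasDerivAt y y' t) :
    HasDerivAt (fun s => hermIP (x s) (y s)) (hermIP x' (y t) + hermIP (x t) y') t := by
  have := HasDerivAt.fun_sum (u := Finset.univ) fun k _ =>
    ((hasDerivAt_pi.1 hx k).star).mul (hasDerivAt_pi.1 hy k)
  simpa only [_root_.hermIP, dotProduct, Pi.star_apply, Pi.mul_apply,
    ← Finset.sum_add_distrib] using this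

lemma HasDerivAt.outerM {x y : ℝ → Vec N} {x' y' : Vec N} {t : ℝ}
    (hx : HasDerivAt x x' t) (hy : HasDerivAt y y' t) :
    HasDerivAt (fun s => outerM (x s) (y s)) (outerM x' (y t) + outerM (x t) y') t :=
  hasDerivAt_pi.2 fun i => hasDerivAt_pi.2 fun j =>
    (hasDerivAt_pi.1 hx i).mul (hasDerivAt_pi.1 hy j).star

lemma differentiableAt_projM {a : Vec N} (ha : hermIP a a ≠ 0) : DifferentiableAt ℝ projM a := by
  have hs : DifferentiableAt ℝ (fun x : Vec N => hermIP x x) a := by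
    unfold hermIP dotProduct
    fun_prop
  have ho : DifferentiableAt ℝ (fun x : Vec N => outerM x x) a := by
    refine differentiableAt_pi.2 fun i => differentiableAt_pi.2 fun j => ?_
    simp only [outerM, vecMulVec_apply, Pi.star_apply]
    fun_prop
  show DifferentiableAt ℝ (fun x => projM x) a
  simp only [projM, one_div]
  exact (differentiableAt_const _).sub ((hs.inv ha).smul ho)

lemma hasLineDerivAt_projM {a : Vec N} (ha : hermIP a a ≠ 0) (u : Vec N) :
    HasLineDerivAt ℝ projM
      (-(hermIP a a)⁻¹ • (outerM (projM a *ᵥ u) a + outerM a (projM a *ᵥ u))) a u := by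
  have hline : HasDerivAt (fun t : ℝ => a + t • u) u 0 := by
    simpa using ((hasDerivAt_id (0 : ℝ)).smul_const u).const_add a
  have hs := hline.hermIP hline
  have ho := hline.outerM hline
  have := (((hasDerivAt_inv (by simpa using ha)).comp 0 hs).smul ho).const_sub 1
  simp only [Function.comp_apply, zero_smul, add_zero] at this
  refine (this.congr_of_eventuallyEq (.of_eq (funext fun t => ?_))).congr_deriv ?_
  · simp only [projM, one_div, Pi.smul_apply', Function.comp_apply]
  · simp only [projM_mulVec, outerM, sub_vecMulVec, vecMulVec_sub, star_sub, star_smul,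
      smul_vecMulVec, vecMulVec_smul, star_div₀, star_hermIP]
    match_scalars <;> ring

lemma pdv_projM_comp {f : ℝ × ℝ → Vec N} {p : ℝ × ℝ} (v : ℝ × ℝ)
    (hf : DifferentiableAt ℝ f p) (hp : f p ≠ 0) :
    pdv v (fun q => projM (f q)) p =
      -(hermIP (f p) (f p))⁻¹ • (outerM (projM (f p) *ᵥ pdv v f p) (f p)
        + outerM (f p) (projM (f p) *ᵥ pdv v f p)) := by
  have hs := hermIP_self_ne_zero hp
  have hP := differentiableAt_projM hs
  rw [pdv, show (fun q => projM (f q)) = projM ∘ f from rfl, fderiv_comp p hP hf,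
    ContinuousLinearMap.comp_apply, ← hP.lineDeriv_eq_fderiv]
  exact (hasLineDerivAt_projM hs _).lineDeriv

end Calculus

theorem stmt2_general {N : ℕ} (Ω : Set (ℝ × ℝ)) (hΩ : IsOpen Ω)
    (f : ℝ × ℝ → Vec N) (hf : ContDiffOn ℝ 1 f Ω) (hfz : ∀ p ∈ Ω, f p ≠ 0) :
    ∀ p ∈ Ω, ∀ v ∈ ({dL, dR} : Set (ℝ × ℝ)),
      mcomm (pdv v (fun q => projM (f q)) p) (projM (f p)) =
        (1 / hermIP (f p) (f p)) •
          (outerM (projM (f p) *ᵥ pdv v f p) (f p)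
            - outerM (f p) (pdv v f p) * projM (f p)) ∧
      (mcomm (pdv v (fun q => projM (f q)) p) (projM (f p)))ᴴ
        = - mcomm (pdv v (fun q => projM (f q)) p) (projM (f p)) ∧
      (mcomm (pdv v (fun q => projM (f q)) p) (projM (f p))).trace = 0 := by
  intro p hp v _
  have hd : DifferentiableAt ℝ f p :=
    (hf.contDiffAt (hΩ.mem_nhds hp)).differentiableAt one_ne_zero
  have hs := hermIP_self_ne_zero (hfz p hp)
  have hP := isHermitian_projM (f p)
  have hX := pdv_projM_comp v hd (hfz p hp)
  have hXherm : (pdv v (fun q => projM (f q)) p).IsHermitian := by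
    rw [hX]
    exact (isHermitian_outerM_add_outerM _ _).smul (isSelfAdjoint_hermIP_self _).inv₀.neg
  refine ⟨?_, conjTranspose_mcomm_of_isHermitian hXherm hP, trace_mcomm _ _⟩
  rw [hX, mcomm_smul_left, mcomm_outerM_add_outerM hP (projM_mulVec_self hs)
    (projM_mulVec_projM_mulVec hs _), outerM_mul, hP.eq, one_div, neg_smul, ← smul_neg, neg_sub]

theorem stmt2 {N : ℕ} (hN : 2 ≤ N) (Ω : Set (ℝ × ℝ)) (hΩ : IsOpen Ω)
    (f : ℝ × ℝ → Vec N) (hf : ContDiffOn ℝ 1 f Ω) (hfz : ∀ p ∈ Ω, f p ≠ 0) :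
    ∀ p ∈ Ω, ∀ v ∈ ({dL, dR} : Set (ℝ × ℝ)),
      mcomm (pdv v (fun q => projM (f q)) p) (projM (f p)) =
        (1 / hermIP (f p) (f p)) •
          (outerM (projM (f p) *ᵥ pdv v f p) (f p)
            - outerM (f p) (pdv v f p) * projM (f p)) ∧
      (mcomm (pdv v (fun q => projM (f q)) p) (projM (f p)))ᴴ
        = - mcomm (pdv v (fun q => projM (f q)) p) (projM (f p)) ∧
      (mcomm (pdv v (fun q => projM (f q)) p) (projM (f p))).trace = 0 :=
  stmt2_general Ω hΩ f hf hfz
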